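/- Let n have shift orbit of cardinality d and j, l ∈ ℤ. The operator Z^{l−j} restricted to span(E_n) is non-degenerate (i.e., the values ω^{(l−j)μ(n')} for n' ∈ E_n are pairwise distinct) if and only if gcd((l−j)·|n|·d/M, d) = 1. -/

import Mathlib

/-!
Shifting the modes cyclically preserves `|n|` and raises `μ` by `|n|` modulo `M`, so
`μ(X^k·n) ≡ μ(n) + k|n|`. With `e = l - j`, `ω^{eμ(X^k·n)} = ω^{eμ(X^{k'}·n)}` iff `M ∣ e|n|(k - k')`.
Since `X^d·n = n` forces `M ∣ |n|d`, writing `|n|d = Mt` this becomes `d ∣ et(k - k')`, and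
`k ↦ et·k` is injective on `[0, d)` modulo `d` exactly when `et` is coprime to `d`.
-/

open Finset

noncomputable section

/-- Total photon number `|n|`. -/
def totalPhotons {M : ℕ} (n : Fin M → ℕ) : ℕ := ∑ m : Fin M, n m

/-- Clock label `μ(n) = Σ m·n(m)`. -/
def clockLabel {M : ℕ} (n : Fin M → ℕ) : ℕ := ∑ m : Fin M, (m : ℕ) * n m

/-- `ω = exp(2πi/M)`. -/
def omegaM (M : ℕ) : ℂ := Complex.exp (2 * Real.pi * Complex.I / M)

/-- The Fock space over `M` modes: amplitudes on occupation vectors. -/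
abbrev Fock (M : ℕ) := (Fin M → ℕ) → ℂ

/-- Mode-shift operator: `X |n⟩ = |X·n⟩` with `(X·n)(m) = n(m−1)` mod `M`. -/
def fockX {M : ℕ} [NeZero M] (f : Fock M) : Fock M := fun v => f (fun m => v (m + 1))

/-- Phase-shift operator: `Z |n⟩ = ω^{μ(n)} |n⟩`. -/
def fockZ {M : ℕ} (f : Fock M) : Fock M := fun v => omegaM M ^ clockLabel v * f v

/-- Fock basis state `|n⟩`. -/
def fockDelta {M : ℕ} (n : Fin M → ℕ) : Fock M := fun v => if v = n then 1 else 0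

/-- Cyclic mode shift on occupation vectors: `(X·n)(m) = n(m-1)` mod `M`. -/
def modeShift {M : ℕ} [NeZero M] (n : Fin M → ℕ) : Fin M → ℕ := fun m => n (m - 1)

theorem IsPrimitiveRoot.zpow_eq_zpow_iff {G₀ : Type*} [CommGroupWithZero G₀] {ζ : G₀} {k : ℕ}
    (h : IsPrimitiveRoot ζ k) (hk : k ≠ 0) (a b : ℤ) : ζ ^ a = ζ ^ b ↔ (a : ZMod k) = b := by
  have hζ : ζ ≠ 0 := h.ne_zero hk
  rw [← div_eq_one_iff_eq (zpow_ne_zero b hζ), ← zpow_sub₀ hζ, h.zpow_eq_one_iff_dvd,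
    ZMod.intCast_eq_intCast_iff_dvd_sub, dvd_sub_comm]

theorem forall_lt_eq_of_dvd_mul_sub_iff_gcd_eq_one {d : ℕ} (hd : 0 < d) (x : ℤ) :
    (∀ k k' : ℕ, k < d → k' < d → (d : ℤ) ∣ x * (k - k') → k = k') ↔ Int.gcd x d = 1 := by
  constructor
  · intro hinj
    by_contra hg
    set g := Int.gcd x d
    have hgd : g ∣ d := Int.ofNat_dvd.mp (Int.gcd_dvd_right x d)
    have hg1 : 1 < g := by
      have := Int.gcd_pos_of_ne_zero_right x (Int.ofNat_ne_zero.mpr hd.ne')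
      omega
    obtain ⟨s, hs⟩ : (g : ℤ) ∣ x := Int.gcd_dvd_left x d
    have hgk : (g : ℤ) * (d / g : ℕ) = d := by exact_mod_cast Nat.mul_div_cancel' hgd
    -- `k = d / g` is a nonzero period of `k ↦ x * k` modulo `d`.
    have hperiod : (d : ℤ) ∣ x * ((d / g : ℕ) - (0 : ℕ)) :=
      ⟨s, by rw [hs, Nat.cast_zero, sub_zero, ← hgk]; ring⟩
    exact (Nat.div_pos (Nat.le_of_dvd hd hgd) (by omega)).ne'
      (hinj _ 0 (Nat.div_lt_self hd hg1) hd hperiod)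
  · intro hg k k' hk hk' hdvd
    have hdk : (d : ℤ) ∣ k - k' :=
      (Int.isCoprime_iff_gcd_eq_one.mpr hg).symm.dvd_of_dvd_mul_left hdvd
    have := Int.eq_zero_of_abs_lt_dvd hdk (by rw [abs_lt]; omega)
    omega

theorem Int.dvd_mul_iff_of_mul_eq {M d N t : ℤ} (hM : M ≠ 0) (hd : d ≠ 0) (h : N * d = M * t)
    (y : ℤ) : M ∣ y * N ↔ d ∣ y * t :=
  calc M ∣ y * N ↔ M * d ∣ y * N * d := (mul_dvd_mul_iff_right hd).symm
    _ ↔ M * d ∣ M * (y * t) := by rw [show y * N * d = M * (y * t) by linear_combination y * h]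
    _ ↔ d ∣ y * t := mul_dvd_mul_iff_left hM

section modeShift

variable {M : ℕ} [NeZero M]

theorem totalPhotons_modeShift (n : Fin M → ℕ) : totalPhotons (modeShift n) = totalPhotons n :=
  Fintype.sum_equiv (Equiv.subRight 1) _ _ fun _ => rfl

theorem totalPhotons_iterate_modeShift (n : Fin M → ℕ) (k : ℕ) :
    totalPhotons (modeShift^[k] n) = totalPhotons n := by
  induction k with
  | zero => rfl
  | succ k ih => rw [Function.iterate_succ_apply', totalPhotons_modeShift, ih]

theorem Fin.natCast_val_add_one (m : Fin M) : (((m + 1 : Fin M) : ℕ) : ZMod M) = m + 1 := by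
  rw [Fin.val_add, Fin.val_one', ZMod.natCast_mod, Nat.cast_add, ZMod.natCast_mod, Nat.cast_one]

theorem clockLabel_modeShift (n : Fin M → ℕ) :
    (clockLabel (modeShift n) : ZMod M) = clockLabel n + totalPhotons n := by
  have hreindex : clockLabel (modeShift n) = ∑ m : Fin M, ((m + 1 : Fin M) : ℕ) * n m :=
    Fintype.sum_equiv (Equiv.subRight 1) _ _ fun _ => by simp [modeShift]
  rw [hreindex, clockLabel, totalPhotons]
  push_cast
  rw [← sum_add_distrib]
  exact sum_congr rfl fun m _ => by rw [Fin.natCast_val_add_one]; ring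

theorem clockLabel_iterate_modeShift (n : Fin M → ℕ) (k : ℕ) :
    (clockLabel (modeShift^[k] n) : ZMod M) = clockLabel n + k * totalPhotons n := by
  induction k with
  | zero => simp
  | succ k ih =>
    rw [Function.iterate_succ_apply', clockLabel_modeShift, totalPhotons_iterate_modeShift, ih]
    push_cast
    ring

theorem dvd_totalPhotons_mul_of_iterate_modeShift_eq {n : Fin M → ℕ} {d : ℕ}
    (hfix : modeShift^[d] n = n) : M ∣ totalPhotons n * d := by
  have h := clockLabel_iterate_modeShift n d
  rw [hfix, left_eq_add, mul_comm] at h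
  exact (ZMod.natCast_eq_zero_iff _ _).mp (by exact_mod_cast h)

theorem isPrimitiveRoot_omegaM : IsPrimitiveRoot (omegaM M) M :=
  Complex.isPrimitiveRoot_exp M (NeZero.ne M)

theorem omegaM_zpow_clockLabel_iterate_eq_iff (n : Fin M → ℕ) (e : ℤ) (k k' : ℕ) :
    omegaM M ^ (e * (clockLabel (modeShift^[k] n) : ℤ))
        = omegaM M ^ (e * (clockLabel (modeShift^[k'] n) : ℤ)) ↔
      (M : ℤ) ∣ e * (k - k') * totalPhotons n := by
  rw [isPrimitiveRoot_omegaM.zpow_eq_zpow_iff (NeZero.ne M),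
    ← sub_eq_zero, ← ZMod.intCast_zmod_eq_zero_iff_dvd]
  push_cast
  rw [clockLabel_iterate_modeShift, clockLabel_iterate_modeShift]
  ring_nf

end modeShift

theorem zpow_nondegenerate_iff_general (M : ℕ) [NeZero M] (j l : ℤ) (n : Fin M → ℕ) (d : ℕ)
    (hd : 0 < d) (hfix : modeShift^[d] n = n) :
    (∀ k k' : ℕ, k < d → k' < d →
        omegaM M ^ ((l - j) * (clockLabel (modeShift^[k] n) : ℤ))
          = omegaM M ^ ((l - j) * (clockLabel (modeShift^[k'] n) : ℤ)) → k = k') ↔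
      Int.gcd ((l - j) * ((totalPhotons n * d / M : ℕ) : ℤ)) (d : ℤ) = 1 := by
  have ht : (totalPhotons n : ℤ) * d = M * (totalPhotons n * d / M : ℕ) := by
    exact_mod_cast (Nat.mul_div_cancel' (dvd_totalPhotons_mul_of_iterate_modeShift_eq hfix)).symm
  simp only [omegaM_zpow_clockLabel_iterate_eq_iff,
    Int.dvd_mul_iff_of_mul_eq (Int.ofNat_ne_zero.mpr (NeZero.ne M))
      (Int.ofNat_ne_zero.mpr hd.ne') ht,
    mul_right_comm _ _ ((totalPhotons n * d / M : ℕ) : ℤ)]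
  exact forall_lt_eq_of_dvd_mul_sub_iff_gcd_eq_one hd _

/-- the operator `Z^{l−j}` restricted to the Pauli subspace `span(E_n)`
(orbit of cardinality `d`) is non-degenerate — i.e. the eigenvalues `ω^{(l−j)μ(n')}` for
`n' ∈ E_n` are pairwise distinct — if and only if `gcd((l−j)·|n|·d/M, d) = 1`. -/
theorem zpow_nondegenerate_iff (M : ℕ) [NeZero M] (j l : ℤ) (n : Fin M → ℕ) (d : ℕ)
    (hd : 0 < d) (hfix : modeShift^[d] n = n)
    (hmin : ∀ k, 0 < k → k < d → modeShift^[k] n ≠ n) (hdM : d ∣ M) :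
    (∀ k k' : ℕ, k < d → k' < d →
        omegaM M ^ ((l - j) * (clockLabel (modeShift^[k] n) : ℤ))
          = omegaM M ^ ((l - j) * (clockLabel (modeShift^[k'] n) : ℤ)) → k = k') ↔
      Int.gcd ((l - j) * ((totalPhotons n * d / M : ℕ) : ℤ)) (d : ℤ) = 1 :=
  zpow_nondegenerate_iff_general M j l n d hd hfix
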